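/- arXiv:math/0309413 — 4 statements merged into one kernel-verified Lean document; each statement's English description precedes it below -/
import Mathlib

section
/- For every integer n ≥ 1, every pair of vectors λ, μ ∈ ℝ^n with λ_1 ≥ … ≥ λ_n ≥ 0 and μ_1 ≥ … ≥ μ_n ≥ 0, and every real c > 0, the symplectic Gelfand–Cetlin polytopes satisfy Δ_{cλ} = c·Δ_λ and Δ_{λ+μ} = Δ_λ + Δ_μ, where the sum on the right is the Minkowski sum of sets. -/
open Pointwise

/-- Index set for the odd rows `V_1, V_3, …, V_{2n-1}` of symplectic Gelfand–Cetlin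
patterns: row `k` (0-indexed, `k = 0, …, n-1`) has `n - k` entries. -/
abbrev SPOddIdx (n : ℕ) := {p : ℕ × ℕ // p.2 < n - p.1}
/-- Index set for the even rows `V_2, V_4, …, V_{2n-2}` of symplectic Gelfand–Cetlin
patterns: row `k` (0-indexed, `k = 0, …, n-2`) has `n - 1 - k` entries. -/
abbrev SPEvenIdx (n : ℕ) := {p : ℕ × ℕ // p.2 < n - 1 - p.1}
/-- The ambient space `ℝ^{n²}` of symplectic Gelfand–Cetlin patterns
(`n(n+1)/2` odd-row entries plus `n(n-1)/2` even-row entries). -/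
abbrev SPPattern (n : ℕ) := (SPOddIdx n → ℝ) × (SPEvenIdx n → ℝ)

/-- The symplectic Gelfand–Cetlin polytope `Δ_λ ⊆ ℝ^{n²}` of `SP(2n)`:
`V_1` interlaces `(λ_1, …, λ_n, 0)`, each `V_{2k}` interlaces `V_{2k-1}`, and each
`V_{2k+1}` interlaces `V_{2k}` with a `0` appended. -/
def gcSP (n : ℕ) (lam : Fin n → ℝ) : Set (SPPattern n) :=
  {x |
    (∀ (i : ℕ) (hi : i < n),
      lam ⟨i, hi⟩ ≥ x.1 ⟨(0, i), by omega⟩ ∧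
      x.1 ⟨(0, i), by omega⟩ ≥ (if h : i + 1 < n then lam ⟨i + 1, h⟩ else 0)) ∧
    (∀ (k i : ℕ) (hi : i < n - 1 - k),
      x.1 ⟨(k, i), by omega⟩ ≥ x.2 ⟨(k, i), hi⟩ ∧
      x.2 ⟨(k, i), hi⟩ ≥ x.1 ⟨(k, i + 1), by omega⟩) ∧
    (∀ (k i : ℕ) (hi : i < n - (k + 1)),
      x.2 ⟨(k, i), by omega⟩ ≥ x.1 ⟨(k + 1, i), by omega⟩ ∧
      x.1 ⟨(k + 1, i), by omega⟩ ≥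
        (if h : i + 1 < n - 1 - k then x.2 ⟨(k, i + 1), h⟩ else 0))}

namespace GCSPAux

/-- total extension of the first (odd-row) coordinates, zero outside range -/
noncomputable def X1 (n : ℕ) (x : SPPattern n) (k i : ℕ) : ℝ :=
  if h : i < n - k then x.1 ⟨(k, i), h⟩ else 0

/-- total extension of the second (even-row) coordinates, zero outside range -/
noncomputable def X2 (n : ℕ) (x : SPPattern n) (k i : ℕ) : ℝ :=
  if h : i < n - 1 - k then x.2 ⟨(k, i), h⟩ else 0

/-- total extension of a vector `Fin n → ℝ`, zero outside range -/
noncomputable def lext (n : ℕ) (lam : Fin n → ℝ) (i : ℕ) : ℝ :=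
  if h : i < n then lam ⟨i, h⟩ else 0

/-- one even row of the λ-part, built from the previous odd row `r` -/
noncomputable def Y2of (n : ℕ) (x : SPPattern n) (r : ℕ → ℝ) (k i : ℕ) : ℝ :=
  if i < n - 1 - k then max (r (i + 1)) (X2 n x k i - (X1 n x k i - r i)) else 0

/-- the odd rows of the λ-part of the splitting -/
noncomputable def Y1 (n : ℕ) (lam mu : Fin n → ℝ) (x : SPPattern n) : ℕ → ℕ → ℝ
  | 0 => fun i => max (lext n lam (i + 1)) (X1 n x 0 i - lext n mu i)
  | k + 1 => fun i =>
      max (Y2of n x (Y1 n lam mu x k) k (i + 1))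
        (X1 n x (k + 1) i - (X2 n x k i - Y2of n x (Y1 n lam mu x k) k i))

/-- the even rows of the λ-part of the splitting -/
noncomputable def Y2 (n : ℕ) (lam mu : Fin n → ℝ) (x : SPPattern n) (k : ℕ) : ℕ → ℝ :=
  Y2of n x (Y1 n lam mu x k) k

/-- upper bounding row for odd row `k` on the λ side -/
noncomputable def U (n : ℕ) (lam mu : Fin n → ℝ) (x : SPPattern n) : ℕ → ℕ → ℝ
  | 0 => lext n lam
  | k + 1 => Y2 n lam mu x k

/-- upper bounding row for odd row `k` on the μ side -/
noncomputable def V (n : ℕ) (lam mu : Fin n → ℝ) (x : SPPattern n) : ℕ → ℕ → ℝ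
  | 0 => lext n mu
  | k + 1 => fun i => X2 n x k i - Y2 n lam mu x k i

lemma step {a' b' a'' b'' v : ℝ} (h1 : b' ≤ a') (h2 : b'' ≤ a'')
    (h3 : v ≤ a' + a'') (h4 : b' + b'' ≤ v) :
    max b' (v - a'') ≤ a' ∧ b' ≤ max b' (v - a'') ∧
      v - max b' (v - a'') ≤ a'' ∧ b'' ≤ v - max b' (v - a'') := by
  refine ⟨max_le h1 (by linarith), le_max_left _ _, ?_, ?_⟩
  · have := le_max_right b' (v - a''); linarith
  · have h : max b' (v - a'') ≤ v - b'' := max_le (by linarith) (by linarith)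
    linarith

lemma lext_dec {n : ℕ} {l : Fin n → ℝ} (hl : ∀ i j : Fin n, i ≤ j → l j ≤ l i)
    (hl0 : ∀ i, 0 ≤ l i) (i : ℕ) :
    lext n l (i + 1) ≤ lext n l i ∧ 0 ≤ lext n l i := by
  unfold lext
  constructor
  · split_ifs with h1 h2
    · exact hl ⟨i, h2⟩ ⟨i + 1, h1⟩ (by simp [Fin.mk_le_mk])
    · omega
    · exact hl0 _
    · exact le_refl 0
  · split_ifs with h
    · exact hl0 _
    · exact le_refl 0

/-- the interlacing statement at odd row `k` -/
def C1 (n : ℕ) (lam mu : Fin n → ℝ) (x : SPPattern n) (k : ℕ) : Prop :=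
  ∀ i, i < n - k →
    Y1 n lam mu x k i ≤ U n lam mu x k i ∧
    U n lam mu x k (i + 1) ≤ Y1 n lam mu x k i ∧
    X1 n x k i - Y1 n lam mu x k i ≤ V n lam mu x k i ∧
    V n lam mu x k (i + 1) ≤ X1 n x k i - Y1 n lam mu x k i ∧
    0 ≤ Y1 n lam mu x k i ∧ 0 ≤ X1 n x k i - Y1 n lam mu x k i

/-- the interlacing statement at even row `k` -/
def C2 (n : ℕ) (lam mu : Fin n → ℝ) (x : SPPattern n) (k : ℕ) : Prop :=
  ∀ i, i < n - 1 - k →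
    Y2 n lam mu x k i ≤ Y1 n lam mu x k i ∧
    Y1 n lam mu x k (i + 1) ≤ Y2 n lam mu x k i ∧
    X2 n x k i - Y2 n lam mu x k i ≤ X1 n x k i - Y1 n lam mu x k i ∧
    X1 n x k (i + 1) - Y1 n lam mu x k (i + 1) ≤ X2 n x k i - Y2 n lam mu x k i ∧
    0 ≤ Y2 n lam mu x k i ∧ 0 ≤ X2 n x k i - Y2 n lam mu x k i

section Main

variable {n : ℕ} {lam mu : Fin n → ℝ} {x : SPPattern n}

lemma hb_of_mem (hx : x ∈ gcSP n (lam + mu)) (k i : ℕ) (hi : i < n - 1 - k) :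
    X2 n x k i ≤ X1 n x k i ∧ X1 n x k (i + 1) ≤ X2 n x k i := by
  obtain ⟨h1, h2⟩ := hx.2.1 k i hi
  rw [X1, X2, dif_pos hi, dif_pos (show i < n - k by omega), X1,
    dif_pos (show i + 1 < n - k by omega)]
  exact ⟨h1, h2⟩

lemma hc_of_mem (hx : x ∈ gcSP n (lam + mu)) (k i : ℕ) (hi : i < n - (k + 1)) :
    X1 n x (k + 1) i ≤ X2 n x k i ∧ X2 n x k (i + 1) ≤ X1 n x (k + 1) i := by
  obtain ⟨h1, h2⟩ := hx.2.2 k i hi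
  rw [X1, dif_pos (show i < n - (k + 1) by omega), X2,
    dif_pos (show i < n - 1 - k by omega)]
  refine ⟨h1, ?_⟩
  rw [X2]
  split_ifs with h
  · rw [dif_pos h] at h2; exact h2
  · rw [dif_neg h] at h2; exact h2

lemma ha_of_mem (hx : x ∈ gcSP n (lam + mu)) (i : ℕ) (hi : i < n) :
    X1 n x 0 i ≤ lext n lam i + lext n mu i ∧
      lext n lam (i + 1) + lext n mu (i + 1) ≤ X1 n x 0 i := by
  obtain ⟨h1, h2⟩ := hx.1 i hi
  rw [X1, dif_pos (show i < n - 0 by omega)]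
  constructor
  · rw [lext, lext, dif_pos hi, dif_pos hi]
    exact le_trans h1 (le_of_eq (Pi.add_apply lam mu ⟨i, hi⟩))
  · rw [lext, lext]
    split_ifs with h
    · rw [dif_pos h] at h2
      exact le_trans (le_of_eq (Pi.add_apply lam mu ⟨i + 1, h⟩).symm) h2
    · rw [dif_neg h] at h2
      simpa using h2

lemma C2_of_C1 (hx : x ∈ gcSP n (lam + mu)) (k : ℕ) (hC1 : C1 n lam mu x k) :
    C2 n lam mu x k := by
  intro i hi
  obtain ⟨u1, u2, u3, u4, u5, u6⟩ := hC1 i (by omega)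
  obtain ⟨w1, w2, w3, w4, w5, w6⟩ := hC1 (i + 1) (by omega)
  have h1 : Y1 n lam mu x k (i + 1) ≤ Y1 n lam mu x k i := le_trans w1 u2
  have h2 : X1 n x k (i + 1) - Y1 n lam mu x k (i + 1) ≤
      X1 n x k i - Y1 n lam mu x k i := le_trans w3 u4
  have hbb := hb_of_mem hx k i hi
  have h3 : X2 n x k i ≤ Y1 n lam mu x k i + (X1 n x k i - Y1 n lam mu x k i) := by
    linarith [hbb.1]
  have h4 : Y1 n lam mu x k (i + 1) +
      (X1 n x k (i + 1) - Y1 n lam mu x k (i + 1)) ≤ X2 n x k i := by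
    linarith [hbb.2]
  obtain ⟨s1, s2, s3, s4⟩ := step h1 h2 h3 h4
  have hY2i : Y2 n lam mu x k i = max (Y1 n lam mu x k (i + 1))
      (X2 n x k i - (X1 n x k i - Y1 n lam mu x k i)) := by
    rw [Y2, Y2of, if_pos hi]
  rw [hY2i]
  exact ⟨s1, s2, s3, s4, le_trans w5 s2, le_trans w6 s4⟩

lemma C1_all (hx : x ∈ gcSP n (lam + mu))
    (hlam : ∀ i j : Fin n, i ≤ j → lam j ≤ lam i) (hlam0 : ∀ i, 0 ≤ lam i)
    (hmu : ∀ i j : Fin n, i ≤ j → mu j ≤ mu i) (hmu0 : ∀ i, 0 ≤ mu i) :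
    ∀ k, C1 n lam mu x k := by
  intro k
  induction k with
  | zero =>
    intro i hi
    have h1 := (lext_dec hlam hlam0 i).1
    have h2 := (lext_dec hmu hmu0 i).1
    have haa := ha_of_mem hx i (by omega)
    obtain ⟨s1, s2, s3, s4⟩ := step h1 h2 haa.1 haa.2
    have hY : Y1 n lam mu x 0 i = max (lext n lam (i + 1))
        (X1 n x 0 i - lext n mu i) := by rw [Y1]
    simp only [U, V]
    rw [hY]
    exact ⟨s1, s2, s3, s4, le_trans (lext_dec hlam hlam0 (i + 1)).2 s2,
      le_trans (lext_dec hmu hmu0 (i + 1)).2 s4⟩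
  | succ k ih =>
    have hC2 := C2_of_C1 hx k ih
    intro i hi
    have hik : i < n - 1 - k := by omega
    obtain ⟨t1, t2, t3, t4, t5, t6⟩ := hC2 i hik
    have hY2z : ¬ (i + 1 < n - 1 - k) → Y2 n lam mu x k (i + 1) = 0 := by
      intro h; rw [Y2, Y2of, if_neg h]
    have hX2z : ¬ (i + 1 < n - 1 - k) → X2 n x k (i + 1) = 0 := by
      intro h; rw [X2, dif_neg h]
    have hb'le : Y2 n lam mu x k (i + 1) ≤ Y2 n lam mu x k i := by
      by_cases h : i + 1 < n - 1 - k
      · exact le_trans (hC2 (i + 1) h).1 t2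
      · rw [hY2z h]; exact t5
    have hb''le : X2 n x k (i + 1) - Y2 n lam mu x k (i + 1) ≤
        X2 n x k i - Y2 n lam mu x k i := by
      by_cases h : i + 1 < n - 1 - k
      · exact le_trans (hC2 (i + 1) h).2.2.1 t4
      · rw [hY2z h, hX2z h]; simpa using t6
    have hcc := hc_of_mem hx k i hi
    have h3 : X1 n x (k + 1) i ≤ Y2 n lam mu x k i +
        (X2 n x k i - Y2 n lam mu x k i) := by linarith [hcc.1]
    have h4 : Y2 n lam mu x k (i + 1) +
        (X2 n x k (i + 1) - Y2 n lam mu x k (i + 1)) ≤ X1 n x (k + 1) i := by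
      linarith [hcc.2]
    obtain ⟨s1, s2, s3, s4⟩ := step hb'le hb''le h3 h4
    have hb'0 : 0 ≤ Y2 n lam mu x k (i + 1) := by
      by_cases h : i + 1 < n - 1 - k
      · exact (hC2 (i + 1) h).2.2.2.2.1
      · rw [hY2z h]
    have hb''0 : 0 ≤ X2 n x k (i + 1) - Y2 n lam mu x k (i + 1) := by
      by_cases h : i + 1 < n - 1 - k
      · exact (hC2 (i + 1) h).2.2.2.2.2
      · rw [hY2z h, hX2z h]; simp
    have hY : Y1 n lam mu x (k + 1) i = max (Y2 n lam mu x k (i + 1))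
        (X1 n x (k + 1) i - (X2 n x k i - Y2 n lam mu x k i)) := by
      rw [Y1]; rfl
    simp only [U, V]
    rw [hY]
    exact ⟨s1, s2, s3, s4, le_trans hb'0 s2, le_trans hb''0 s4⟩

lemma decomp (hx : x ∈ gcSP n (lam + mu))
    (hlam : ∀ i j : Fin n, i ≤ j → lam j ≤ lam i) (hlam0 : ∀ i, 0 ≤ lam i)
    (hmu : ∀ i j : Fin n, i ≤ j → mu j ≤ mu i) (hmu0 : ∀ i, 0 ≤ mu i) :
    ∃ y ∈ gcSP n lam, ∃ z ∈ gcSP n mu, y + z = x := by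
  have hC1 := C1_all hx hlam hlam0 hmu hmu0
  have hC2 : ∀ k, C2 n lam mu x k := fun k => C2_of_C1 hx k (hC1 k)
  set y : SPPattern n :=
    (fun p => Y1 n lam mu x p.1.1 p.1.2, fun p => Y2 n lam mu x p.1.1 p.1.2) with hy
  refine ⟨y, ?_, x - y, ?_, by abel⟩
  · refine ⟨fun i hi => ?_, fun k i hi => ?_, fun k i hi => ?_⟩
    · obtain ⟨u1, u2, _⟩ := hC1 0 i (by omega)
      constructor
      · have hU : U n lam mu x 0 i = lam ⟨i, hi⟩ := by
          simp only [U]; rw [lext, dif_pos hi]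
        exact hU ▸ u1
      · simpa only [U, lext] using u2
    · obtain ⟨s1, s2, _⟩ := hC2 k i hi
      exact ⟨s1, s2⟩
    · obtain ⟨u1, u2, _⟩ := hC1 (k + 1) i hi
      simp only [U] at u1 u2
      refine ⟨u1, ?_⟩
      split_ifs with h
      · rwa [show Y2 n lam mu x k (i + 1) = y.2 ⟨(k, i + 1), h⟩ from rfl] at u2
      · rw [Y2, Y2of, if_neg h] at u2
        exact u2
  · have hz1 : ∀ k i (h : i < n - k),
        (x - y).1 ⟨(k, i), h⟩ = X1 n x k i - Y1 n lam mu x k i := by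
      intro k i h
      rw [X1, dif_pos h]; rfl
    have hz2 : ∀ k i (h : i < n - 1 - k),
        (x - y).2 ⟨(k, i), h⟩ = X2 n x k i - Y2 n lam mu x k i := by
      intro k i h
      rw [X2, dif_pos h]; rfl
    refine ⟨fun i hi => ?_, fun k i hi => ?_, fun k i hi => ?_⟩
    · obtain ⟨_, _, u3, u4, _⟩ := hC1 0 i (by omega)
      rw [hz1 0 i (by omega)]
      constructor
      · have hV : V n lam mu x 0 i = mu ⟨i, hi⟩ := by
          simp only [V]; rw [lext, dif_pos hi]
        exact hV ▸ u3
      · simpa only [V, lext] using u4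
    · obtain ⟨_, _, s3, s4, _⟩ := hC2 k i hi
      rw [hz1 k i (by omega), hz1 k (i + 1) (by omega), hz2 k i hi]
      exact ⟨s3, s4⟩
    · obtain ⟨_, _, u3, u4, _⟩ := hC1 (k + 1) i hi
      simp only [V] at u3 u4
      rw [hz1 (k + 1) i (by omega), hz2 k i (by omega)]
      refine ⟨u3, ?_⟩
      split_ifs with h
      · rwa [hz2 k (i + 1) h]
      · rw [X2, dif_neg h, Y2, Y2of, if_neg h] at u4
        simpa using u4

lemma smul_mem {c : ℝ} (hc : 0 ≤ c) (hx : x ∈ gcSP n lam) :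
    c • x ∈ gcSP n (c • lam) := by
  obtain ⟨h1, h2, h3⟩ := hx
  refine ⟨fun i hi => ?_, fun k i hi => ?_, fun k i hi => ?_⟩
  · obtain ⟨a, b⟩ := h1 i hi
    simp only [Prod.smul_fst, Pi.smul_apply, smul_eq_mul]
    refine ⟨mul_le_mul_of_nonneg_left a hc, ?_⟩
    split_ifs with h
    · rw [dif_pos h] at b
      exact mul_le_mul_of_nonneg_left b hc
    · rw [dif_neg h] at b
      exact mul_nonneg hc b
  · obtain ⟨a, b⟩ := h2 k i hi
    simp only [Prod.smul_fst, Prod.smul_snd, Pi.smul_apply, smul_eq_mul]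
    exact ⟨mul_le_mul_of_nonneg_left a hc, mul_le_mul_of_nonneg_left b hc⟩
  · obtain ⟨a, b⟩ := h3 k i hi
    simp only [Prod.smul_fst, Prod.smul_snd, Pi.smul_apply, smul_eq_mul]
    refine ⟨mul_le_mul_of_nonneg_left a hc, ?_⟩
    split_ifs with h
    · rw [dif_pos h] at b
      exact mul_le_mul_of_nonneg_left b hc
    · rw [dif_neg h] at b
      exact mul_nonneg hc b

lemma add_mem {x' : SPPattern n} (hx : x ∈ gcSP n lam) (hx' : x' ∈ gcSP n mu) :
    x + x' ∈ gcSP n (lam + mu) := by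
  obtain ⟨h1, h2, h3⟩ := hx
  obtain ⟨g1, g2, g3⟩ := hx'
  refine ⟨fun i hi => ?_, fun k i hi => ?_, fun k i hi => ?_⟩
  · obtain ⟨a, b⟩ := h1 i hi
    obtain ⟨a', b'⟩ := g1 i hi
    simp only [Prod.fst_add, Pi.add_apply]
    refine ⟨add_le_add a a', ?_⟩
    split_ifs with h
    · rw [dif_pos h] at b b'
      exact add_le_add b b'
    · rw [dif_neg h] at b b'
      exact add_nonneg b b'
  · obtain ⟨a, b⟩ := h2 k i hi
    obtain ⟨a', b'⟩ := g2 k i hi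
    simp only [Prod.fst_add, Prod.snd_add, Pi.add_apply]
    exact ⟨add_le_add a a', add_le_add b b'⟩
  · obtain ⟨a, b⟩ := h3 k i hi
    obtain ⟨a', b'⟩ := g3 k i hi
    simp only [Prod.fst_add, Prod.snd_add, Pi.add_apply]
    refine ⟨add_le_add a a', ?_⟩
    split_ifs with h
    · rw [dif_pos h] at b b'
      exact add_le_add b b'
    · rw [dif_neg h] at b b'
      exact add_nonneg b b'

end Main

end GCSPAux

/-- For every `n ≥ 1`, every pair of weakly decreasing nonnegative
vectors `λ, μ ∈ ℝⁿ`, and every real `c > 0`, the symplectic Gelfand–Cetlin polytopes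
satisfy `Δ_{cλ} = c·Δ_λ` and `Δ_{λ+μ} = Δ_λ + Δ_μ` (Minkowski sum). -/
theorem gcSP_linear (n : ℕ) (hn : 1 ≤ n) (lam mu : Fin n → ℝ)
    (hlam : ∀ i j : Fin n, i ≤ j → lam j ≤ lam i) (hlam0 : ∀ i, 0 ≤ lam i)
    (hmu : ∀ i j : Fin n, i ≤ j → mu j ≤ mu i) (hmu0 : ∀ i, 0 ≤ mu i)
    (c : ℝ) (hc : 0 < c) :
    gcSP n (c • lam) = c • gcSP n lam ∧
    gcSP n (lam + mu) = gcSP n lam + gcSP n mu := by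
  constructor
  · ext x
    simp only [Set.mem_smul_set]
    constructor
    · intro hx
      refine ⟨c⁻¹ • x, ?_, smul_inv_smul₀ hc.ne' x⟩
      have h := GCSPAux.smul_mem (inv_nonneg.mpr hc.le) hx
      rwa [inv_smul_smul₀ hc.ne'] at h
    · rintro ⟨y, hy, rfl⟩
      exact GCSPAux.smul_mem hc.le hy
  · ext x
    rw [Set.mem_add]
    constructor
    · intro hx
      exact GCSPAux.decomp hx hlam hlam0 hmu hmu0
    · rintro ⟨y, hy, z, hz, rfl⟩
      exact GCSPAux.add_mem hy hz
end

section
/- Let n ≥ 2, let λ, μ ∈ ℝ^n be weakly decreasing, and let x ∈ ℝ^{n−1} satisfy λ_i + μ_i ≥ x_i ≥ λ_{i+1} + μ_{i+1} for all 1 ≤ i ≤ n−1. Then there exist y, z ∈ ℝ^{n−1} with x = y + z such that λ_i ≥ y_i ≥ λ_{i+1} and μ_i ≥ z_i ≥ μ_{i+1} for all 1 ≤ i ≤ n−1. (This is the one-row splitting step underlying the Minkowski additivity Δ_{λ+μ} = Δ_λ + Δ_μ of Gelfand–Cetlin polytopes.) -/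
/-- (One-row splitting step for Minkowski additivity of
Gelfand–Cetlin polytopes.) Let `n ≥ 2`, let `λ, μ ∈ ℝⁿ` be weakly decreasing, and let
`x ∈ ℝ^{n-1}` interlace `λ + μ`, i.e. `λ_i + μ_i ≥ x_i ≥ λ_{i+1} + μ_{i+1}` for all
`1 ≤ i ≤ n-1`. Then `x = y + z` for some `y, z ∈ ℝ^{n-1}` with `y` interlacing `λ`
and `z` interlacing `μ`. -/
theorem interlacing_split (n : ℕ) (hn : 2 ≤ n) (lam mu : Fin n → ℝ)
    (hlam : ∀ i j : Fin n, i ≤ j → lam j ≤ lam i)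
    (hmu : ∀ i j : Fin n, i ≤ j → mu j ≤ mu i)
    (x : Fin (n - 1) → ℝ)
    (hx : ∀ i : Fin (n - 1),
      lam ⟨i.val, by omega⟩ + mu ⟨i.val, by omega⟩ ≥ x i ∧
      x i ≥ lam ⟨i.val + 1, by omega⟩ + mu ⟨i.val + 1, by omega⟩) :
    ∃ y z : Fin (n - 1) → ℝ, x = y + z ∧
      (∀ i : Fin (n - 1),
        lam ⟨i.val, by omega⟩ ≥ y i ∧ y i ≥ lam ⟨i.val + 1, by omega⟩) ∧
      (∀ i : Fin (n - 1),
        mu ⟨i.val, by omega⟩ ≥ z i ∧ z i ≥ mu ⟨i.val + 1, by omega⟩) := by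
  refine ⟨fun i => max (lam ⟨i.val + 1, by omega⟩) (x i - mu ⟨i.val, by omega⟩),
    fun i => x i - max (lam ⟨i.val + 1, by omega⟩) (x i - mu ⟨i.val, by omega⟩),
    ?_, ?_, ?_⟩
  · funext i; simp
  · intro i
    obtain ⟨h1, h2⟩ := hx i
    have hl : lam ⟨i.val + 1, by omega⟩ ≤ lam ⟨i.val, by omega⟩ :=
      hlam _ _ (by simp [Fin.le_def])
    constructor
    · exact le_of_eq (rfl) |>.trans (by exact max_le hl (by linarith))
    · exact le_max_left _ _
  · intro i
    dsimp only
    obtain ⟨h1, h2⟩ := hx i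
    have hm : mu ⟨i.val + 1, by omega⟩ ≤ mu ⟨i.val, by omega⟩ :=
      hmu _ _ (by simp [Fin.le_def])
    constructor
    · have : x i - mu ⟨i.val, by omega⟩ ≤ max (lam ⟨i.val + 1, by omega⟩) (x i - mu ⟨i.val, by omega⟩) := le_max_right _ _
      linarith
    · have : max (lam ⟨i.val + 1, by omega⟩) (x i - mu ⟨i.val, by omega⟩) ≤ x i - mu ⟨i.val + 1, by omega⟩ :=
        max_le (by linarith) (by linarith)
      linarith
end

section
/- Let n ≥ 1 and let F be a finite subset of the cone {λ ∈ ℝ^n : λ_1 ≥ … ≥ λ_n ≥ 0}, and let Φ be the convex hull of F. Then the set Δ = {(λ, x) ∈ ℝ^n × ℝ^{n²} : λ ∈ Φ and x ∈ Δ_λ}, fibred over Φ with the symplectic Gelfand–Cetlin polytopes as fibres, is a convex polytope; i.e., there exists a finite set S ⊆ ℝ^n × ℝ^{n²} such that Δ equals the convex hull of S. -/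
open Pointwise

/-!
Patterns in `Δ_λ` have all entries in `[0, M]` when `M` bounds the coordinates of `λ`: each
odd row, padded by zeros, is antitone, and interlacing bounds each row by the row above. Hence
`Δ` is the polytope `conv F × [0, M]^{n²}` cut by the interlacing inequalities, which are
finitely many and linear in `(λ, x)` jointly. Cutting `conv S` by a half-space `f ≤ c` leaves the
hull of the points of `S` with `f ≤ c` and of the points where segments between points of `S` on
opposite sides cross `f = c`: a point of `conv S` lies on a segment `[u, v]` with `u`, `v` in
the hulls of the two sides, and the crossing point of `[u, v]` is a convex combination of
crossing points of such segments, since `(u, v) ↦ crossing point` is a perspective map in each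
argument.
-/

open Set AffineMap

section Halfspace

variable {E : Type*} [AddCommGroup E] [Module ℝ E] {f : E →ₗ[ℝ] ℝ} {c : ℝ}

variable (f c) in
noncomputable def crossPt (u v : E) : E := lineMap u v ((c - f u) / (f v - f u))

variable (f) in
lemma map_lineMap_eq (u v : E) (t : ℝ) : f (lineMap u v t) = f u + t * (f v - f u) := by
  rw [lineMap_apply_module', map_add, map_smul, map_sub, smul_eq_mul, add_comm]

lemma map_crossPt {u v : E} (h : f u ≠ f v) : f (crossPt f c u v) = c := by
  rw [crossPt, map_lineMap_eq, div_mul_cancel₀ _ (sub_ne_zero.2 h.symm)]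
  ring

lemma crossPt_mem_segment {u v : E} (hu : f u ≤ c) (hv : c < f v) :
    crossPt f c u v ∈ segment ℝ u v :=
  lineMap_mem_segment ℝ u v ⟨div_nonneg (by linarith) (by linarith),
    (div_le_one (by linarith)).2 (by linarith)⟩

lemma mem_segment_crossPt {u v p : E} (hu : f u ≤ c) (hv : c < f v) (hp : p ∈ segment ℝ u v)
    (hpc : f p ≤ c) : p ∈ segment ℝ u (crossPt f c u v) := by
  rw [segment_eq_image_lineMap] at hp ⊢
  obtain ⟨t, ⟨ht₀, -⟩, rfl⟩ := hp
  have hvu : 0 < f v - f u := by linarith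
  have hs : 0 ≤ (c - f u) / (f v - f u) := div_nonneg (by linarith) hvu.le
  have hts : t ≤ (c - f u) / (f v - f u) := by
    rw [le_div_iff₀ hvu]
    linarith [map_lineMap_eq f u v t]
  refine ⟨t / ((c - f u) / (f v - f u)), ⟨div_nonneg ht₀ hs, div_le_one_of_le₀ hts hs⟩, ?_⟩
  rw [crossPt, lineMap_lineMap_right, div_mul_cancel_of_imp fun h => by linarith]

lemma crossPt_neg_swap {u v : E} (h : f u ≠ f v) : crossPt (-f) (-c) v u = crossPt f c u v := by
  have h' : f v - f u ≠ 0 := sub_ne_zero.2 h.symm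
  rw [crossPt, crossPt, ← lineMap_apply_one_sub]
  congr 1
  simp only [LinearMap.neg_apply, neg_sub_neg]
  field_simp
  ring

/-- The crossing point for `a • v₁ + b • v₂` is the convex combination of those for `v₁, v₂`
with weights proportional to `a (f v₁ - f u)` and `b (f v₂ - f u)`. -/
lemma convex_setOf_crossPt_mem {K : Set E} (hK : Convex ℝ K) (u : E) :
    Convex ℝ {v | f u < f v ∧ crossPt f c u v ∈ K} := by
  rintro v₁ ⟨h₁, hK₁⟩ v₂ ⟨h₂, hK₂⟩ a b ha hb hab
  obtain rfl : b = 1 - a := by linarith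
  have hd : f (a • v₁ + (1 - a) • v₂) - f u = a * (f v₁ - f u) + (1 - a) * (f v₂ - f u) := by
    simp only [map_add, map_smul, smul_eq_mul]
    ring
  have hpos : 0 < a * (f v₁ - f u) + (1 - a) * (f v₂ - f u) := by
    rcases ha.eq_or_lt with rfl | ha
    · linarith
    · nlinarith
  refine ⟨by linarith, ?_⟩
  convert hK hK₁ hK₂ (div_nonneg (mul_nonneg ha (sub_pos.2 h₁).le) hpos.le)
    (div_nonneg (mul_nonneg hb (sub_pos.2 h₂).le) hpos.le) (by field_simp) using 1
  have h₁' : f v₁ - f u ≠ 0 := by linarith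
  have h₂' : f v₂ - f u ≠ 0 := by linarith
  simp only [crossPt, lineMap_apply_module', hd]
  match_scalars <;> field_simp
  ring

lemma convex_setOf_crossPt_mem_left {K : Set E} (hK : Convex ℝ K) (v : E) :
    Convex ℝ {u | f u < f v ∧ crossPt f c u v ∈ K} := by
  convert convex_setOf_crossPt_mem (f := -f) (c := -c) hK v using 1
  ext u
  simp only [mem_ofPred_eq, LinearMap.neg_apply, neg_lt_neg_iff]
  exact and_congr_right fun h => by rw [crossPt_neg_swap h.ne]

lemma crossPt_mem_convexHull_image2 {A B : Set E} (hA : ∀ a ∈ A, f a ≤ c)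
    (hB : ∀ b ∈ B, c < f b) {u v : E} (hu : u ∈ convexHull ℝ A) (hv : v ∈ convexHull ℝ B) :
    crossPt f c u v ∈ convexHull ℝ (image2 (crossPt f c) A B) := by
  set K := convexHull ℝ (image2 (crossPt f c) A B)
  have hleft : ∀ b ∈ B, convexHull ℝ A ⊆ {u | f u < f b ∧ crossPt f c u b ∈ K} :=
    fun b hb => convexHull_min (t := {u | f u < f b ∧ crossPt f c u b ∈ K})
      (fun a ha => And.intro ((hA a ha).trans_lt (hB b hb))
        (subset_convexHull ℝ _ (mem_image2_of_mem ha hb)))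
      (convex_setOf_crossPt_mem_left (convex_convexHull ℝ _) b)
  have hfu : f u ≤ c := convexHull_min hA (convex_halfSpace_le f.isLinear c) hu
  exact (convexHull_min (t := {v | f u < f v ∧ crossPt f c u v ∈ K})
    (fun b hb => ⟨hfu.trans_lt (hB b hb), (hleft b hb hu).2⟩)
    (convex_setOf_crossPt_mem (convex_convexHull ℝ _) u) hv).2

variable (f c) in
theorem convexHull_inter_halfSpace_le (S : Set E) :
    convexHull ℝ S ∩ {x | f x ≤ c} = convexHull ℝ
      ({x ∈ S | f x ≤ c} ∪ image2 (crossPt f c) {x ∈ S | f x ≤ c} {x ∈ S | c < f x}) := by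
  set A := {x ∈ S | f x ≤ c}
  set B := {x ∈ S | c < f x}
  have hAB : S = A ∪ B := by
    ext x
    simp only [A, B, mem_union, mem_ofPred_eq, ← and_or_left, le_or_gt, and_true]
  refine Subset.antisymm ?_ (convexHull_min ?_ ((convex_convexHull ℝ S).inter
    (convex_halfSpace_le f.isLinear c)))
  · rintro p ⟨hp, hpc⟩
    rcases B.eq_empty_or_nonempty with hB | hB
    · rw [hAB, hB, union_empty] at hp
      exact convexHull_mono subset_union_left hp
    have hfB : convexHull ℝ B ⊆ {x | c < f x} :=
      convexHull_min (fun x hx => hx.2) (convex_halfSpace_gt f.isLinear c)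
    rcases A.eq_empty_or_nonempty with hA | hA
    · rw [hAB, hA, empty_union] at hp
      have hpB : c < f p := hfB hp
      exact absurd hpc hpB.not_ge
    rw [hAB, convexHull_union hA hB, mem_convexJoin] at hp
    obtain ⟨u, hu, v, hv, hp⟩ := hp
    have hfu : f u ≤ c := convexHull_min (fun x hx => hx.2) (convex_halfSpace_le f.isLinear c) hu
    exact (convex_convexHull ℝ _).segment_subset (convexHull_mono subset_union_left hu)
      (convexHull_mono subset_union_right
        (crossPt_mem_convexHull_image2 (fun x hx => hx.2) (fun x hx => hx.2) hu hv))
      (mem_segment_crossPt hfu (hfB hv) hp hpc)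
  · rintro x (⟨hxS, hxc⟩ | ⟨a, ⟨haS, hac⟩, b, ⟨hbS, hbc⟩, rfl⟩)
    · exact ⟨subset_convexHull ℝ S hxS, hxc⟩
    · exact ⟨segment_subset_convexHull haS hbS (crossPt_mem_segment hac hbc),
        (map_crossPt (hac.trans_lt hbc).ne).le⟩

end Halfspace

section Polytope

variable {E F : Type*} [AddCommGroup E] [Module ℝ E] [AddCommGroup F] [Module ℝ F]

def IsPolytope (P : Set E) : Prop := ∃ S : Set E, S.Finite ∧ P = convexHull ℝ S

lemma isPolytope_convexHull {S : Set E} (hS : S.Finite) : IsPolytope (convexHull ℝ S) :=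
  ⟨S, hS, rfl⟩

lemma isPolytope_Icc (a b : ℝ) : IsPolytope (Icc a b) := by
  rcases le_or_gt a b with hab | hab
  · exact ⟨{a, b}, toFinite _, by rw [convexHull_pair, segment_eq_Icc hab]⟩
  · exact ⟨∅, finite_empty, by rw [convexHull_empty, Icc_eq_empty_of_lt hab]⟩

lemma IsPolytope.prod {P : Set E} {Q : Set F} (hP : IsPolytope P) (hQ : IsPolytope Q) :
    IsPolytope (P ×ˢ Q) := by
  obtain ⟨S, hS, rfl⟩ := hP
  obtain ⟨T, hT, rfl⟩ := hQ
  exact ⟨S ×ˢ T, hS.prod hT, (convexHull_prod S T).symm⟩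

lemma IsPolytope.pi {ι : Type*} [Finite ι] {P : ι → Set ℝ} (hP : ∀ i, IsPolytope (P i)) :
    IsPolytope (univ.pi P) := by
  choose S hS hPS using hP
  obtain rfl : P = fun i => convexHull ℝ (S i) := funext hPS
  exact ⟨univ.pi S, Finite.pi hS, (convexHull_pi univ S).symm⟩

lemma IsPolytope.inter_halfSpace_le {P : Set E} (hP : IsPolytope P) (f : E →ₗ[ℝ] ℝ) (c : ℝ) :
    IsPolytope (P ∩ {x | f x ≤ c}) := by
  obtain ⟨S, hS, rfl⟩ := hP
  exact ⟨_, (hS.sep _).union ((hS.sep _).image2 _ (hS.sep _)), convexHull_inter_halfSpace_le f c S⟩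

lemma IsPolytope.inter_forall_halfSpace_le {ι : Type*} [Finite ι] {P : Set E} (hP : IsPolytope P)
    (f : ι → E →ₗ[ℝ] ℝ) (c : ι → ℝ) : IsPolytope (P ∩ {x | ∀ i, f i x ≤ c i}) := by
  classical
  have := Fintype.ofFinite ι
  suffices h : ∀ (s : Finset ι) (P : Set E), IsPolytope P →
      IsPolytope (P ∩ {x | ∀ i ∈ s, f i x ≤ c i}) by
    simpa using h Finset.univ P hP
  intro s
  induction s using Finset.induction_on with
  | empty => simp
  | insert i s _ ih =>
    intro P hP
    simpa only [Finset.forall_mem_insert, ofPred_and, inter_assoc] using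
      ih _ (hP.inter_halfSpace_le (f i) (c i))

end Polytope

instance (n : ℕ) : Finite (SPOddIdx n) :=
  ((finite_Iic (n, n)).subset fun p (hp : p.2 < n - p.1) =>
    show p ≤ (n, n) from ⟨by omega, by omega⟩).to_subtype

instance (n : ℕ) : Finite (SPEvenIdx n) :=
  ((finite_Iic (n, n)).subset fun p (hp : p.2 < n - 1 - p.1) =>
    show p ≤ (n, n) from ⟨by omega, by omega⟩).to_subtype

section Forms

variable {n : ℕ}

def lamCoord (i : Fin n) : (Fin n → ℝ) × SPPattern n →ₗ[ℝ] ℝ :=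
  LinearMap.proj i ∘ₗ LinearMap.fst ℝ _ _

def oddCoord (q : SPOddIdx n) : (Fin n → ℝ) × SPPattern n →ₗ[ℝ] ℝ :=
  LinearMap.proj q ∘ₗ LinearMap.fst ℝ _ _ ∘ₗ LinearMap.snd ℝ _ _

def evenCoord (q : SPEvenIdx n) : (Fin n → ℝ) × SPPattern n →ₗ[ℝ] ℝ :=
  LinearMap.proj q ∘ₗ LinearMap.snd ℝ _ _ ∘ₗ LinearMap.snd ℝ _ _

@[simp] lemma lamCoord_apply (i : Fin n) (p : (Fin n → ℝ) × SPPattern n) :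
    lamCoord i p = p.1 i := rfl

@[simp] lemma oddCoord_apply (q : SPOddIdx n) (p : (Fin n → ℝ) × SPPattern n) :
    oddCoord q p = p.2.1 q := rfl

@[simp] lemma evenCoord_apply (q : SPEvenIdx n) (p : (Fin n → ℝ) × SPPattern n) :
    evenCoord q p = p.2.2 q := rfl

variable (n) in
def gcForm :
    Fin n ⊕ Fin n ⊕ SPEvenIdx n ⊕ SPEvenIdx n ⊕ SPEvenIdx n ⊕ SPEvenIdx n →
      ((Fin n → ℝ) × SPPattern n →ₗ[ℝ] ℝ)
  | .inl i => oddCoord ⟨(0, i), by omega⟩ - lamCoord i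
  | .inr (.inl i) =>
      (if h : i.1 + 1 < n then lamCoord ⟨i + 1, h⟩ else 0) - oddCoord ⟨(0, i), by omega⟩
  | .inr (.inr (.inl q)) => evenCoord q - oddCoord ⟨q.1, by omega⟩
  | .inr (.inr (.inr (.inl q))) => oddCoord ⟨(q.1.1, q.1.2 + 1), by omega⟩ - evenCoord q
  | .inr (.inr (.inr (.inr (.inl q)))) => oddCoord ⟨(q.1.1 + 1, q.1.2), by omega⟩ - evenCoord q
  | .inr (.inr (.inr (.inr (.inr q)))) =>
      (if h : q.1.2 + 1 < n - 1 - q.1.1 then evenCoord ⟨(q.1.1, q.1.2 + 1), h⟩ else 0) -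
        oddCoord ⟨(q.1.1 + 1, q.1.2), by omega⟩

lemma mem_gcSP_iff {lam : Fin n → ℝ} {x : SPPattern n} :
    x ∈ gcSP n lam ↔ ∀ j, gcForm n j (lam, x) ≤ 0 := by
  simp [gcSP, gcForm, Sum.forall, DFunLike.dite_apply, Fin.forall_iff, forall_and, and_assoc,
    Nat.sub_sub, add_comm]

end Forms

section Bounds

variable {n : ℕ} {lam : Fin n → ℝ} {x : SPPattern n}

def oddRow (x : SPPattern n) (k i : ℕ) : ℝ := if h : i < n - k then x.1 ⟨(k, i), h⟩ else 0

lemma oddRow_succ_le (hx : x ∈ gcSP n lam) (k i : ℕ) : oddRow x k (i + 1) ≤ oddRow x k i := by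
  obtain ⟨h₁, -, h₃⟩ := hx
  unfold oddRow
  split_ifs with hi' hi hi
  · cases k with
    | zero =>
      have hlo := (h₁ i hi).2
      rw [dif_pos (by omega)] at hlo
      linarith [(h₁ (i + 1) hi').1]
    | succ k =>
      have hlo := (h₃ k i (by omega)).2
      rw [dif_pos (by omega)] at hlo
      linarith [(h₃ k (i + 1) (by omega)).1]
  · omega
  · cases k with
    | zero =>
      have hlo := (h₁ i hi).2
      rwa [dif_neg (by omega)] at hlo
    | succ k =>
      have hlo := (h₃ k i (by omega)).2
      rwa [dif_neg (by omega)] at hlo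
  · exact le_rfl

lemma gcSP_odd_nonneg (hx : x ∈ gcSP n lam) (q : SPOddIdx n) : 0 ≤ x.1 q := by
  obtain ⟨⟨k, i⟩, hq⟩ := q
  have hle := antitone_nat_of_succ_le (oddRow_succ_le hx k) (show i ≤ n by omega)
  simpa [oddRow, hq, show ¬n < n - k by omega] using hle

lemma gcSP_odd_le {M : ℝ} (hx : x ∈ gcSP n lam) (hM : ∀ i, lam i ≤ M) :
    ∀ k i (hq : i < n - k), x.1 ⟨(k, i), hq⟩ ≤ M
  | 0, i, hq => ((hx.1 i (by omega)).1).trans (hM _)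
  | k + 1, i, hq => ((hx.2.2 k i (by omega)).1).trans
      (((hx.2.1 k i (by omega)).1).trans (gcSP_odd_le hx hM k i (by omega)))

lemma gcSP_subset_pi_Icc {M : ℝ} (hM : ∀ i, lam i ≤ M) :
    gcSP n lam ⊆ (univ.pi fun _ => Icc 0 M) ×ˢ (univ.pi fun _ => Icc 0 M) := by
  intro x hx
  refine ⟨fun ⟨⟨k, i⟩, hq⟩ _ => ⟨gcSP_odd_nonneg hx _, gcSP_odd_le hx hM k i hq⟩,
    fun ⟨⟨k, i⟩, hq⟩ _ => ⟨?_, ?_⟩⟩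
  · exact (gcSP_odd_nonneg hx ⟨(k + 1, i), by omega⟩).trans (hx.2.2 k i (by omega)).1
  · exact ((hx.2.1 k i hq).1).trans (gcSP_odd_le hx hM k i (by omega))

end Bounds

theorem gcSP_fibred_polytope_general (n : ℕ) (F : Set (Fin n → ℝ))
    (hF : F.Finite) :
    ∃ S : Set ((Fin n → ℝ) × SPPattern n), S.Finite ∧
      {p : (Fin n → ℝ) × SPPattern n | p.1 ∈ convexHull ℝ F ∧ p.2 ∈ gcSP n p.1} =
        convexHull ℝ S := by
  obtain ⟨L, hL⟩ := hF.bddAbove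
  obtain ⟨M, hM⟩ := (finite_range L).bddAbove
  have hbound : ∀ lam ∈ convexHull ℝ F, ∀ i, lam i ≤ M := fun lam hlam i =>
    (convexHull_min hL (convex_Iic L) hlam i).trans (hM ⟨i, rfl⟩)
  have hΔ : {p : (Fin n → ℝ) × SPPattern n | p.1 ∈ convexHull ℝ F ∧ p.2 ∈ gcSP n p.1} =
      (convexHull ℝ F ×ˢ ((univ.pi fun _ => Icc 0 M) ×ˢ (univ.pi fun _ => Icc 0 M))) ∩
        {p | ∀ j, gcForm n j p ≤ 0} := by
    ext ⟨lam, x⟩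
    simp only [mem_inter_iff, mem_prod, mem_ofPred_eq, ← mem_gcSP_iff]
    exact ⟨fun h => ⟨⟨h.1, gcSP_subset_pi_Icc (hbound lam h.1) h.2⟩, h.2⟩,
      fun h => ⟨h.1.1, h.2⟩⟩
  rw [hΔ]
  exact ((isPolytope_convexHull hF).prod ((IsPolytope.pi fun _ => isPolytope_Icc 0 M).prod
    (IsPolytope.pi fun _ => isPolytope_Icc 0 M))).inter_forall_halfSpace_le _ _

/-- For `n ≥ 1`, a finite subset `F` of the cone
`{λ ∈ ℝⁿ : λ_1 ≥ … ≥ λ_n ≥ 0}` and `Φ = conv(F)`, the set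
`Δ = {(λ, x) : λ ∈ Φ, x ∈ Δ_λ}` fibred over `Φ` with the symplectic Gelfand–Cetlin
polytopes as fibres is a convex polytope: it is the convex hull of a finite set. -/
theorem gcSP_fibred_polytope (n : ℕ) (hn : 1 ≤ n) (F : Set (Fin n → ℝ))
    (hF : F.Finite)
    (hFcone : ∀ lam ∈ F, (∀ i j : Fin n, i ≤ j → lam j ≤ lam i) ∧ (∀ i, 0 ≤ lam i)) :
    ∃ S : Set ((Fin n → ℝ) × SPPattern n), S.Finite ∧
      {p : (Fin n → ℝ) × SPPattern n | p.1 ∈ convexHull ℝ F ∧ p.2 ∈ gcSP n p.1} =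
        convexHull ℝ S :=
  gcSP_fibred_polytope_general n F hF
end

section
/- Let n ≥ 1, let A : ℝ^{n²} → ℝ^{n²} be an invertible linear map, and let B : ℝ^n → ℝ^{n²} be a linear map. For λ ∈ ℝ^n with λ_1 ≥ … ≥ λ_n ≥ 0 define Δ'_λ := A^{−1}(Δ_λ − Bλ), where Δ_λ is the symplectic Gelfand–Cetlin polytope. Then the assignment λ ↦ Δ'_λ is linear: Δ'_{cλ} = c·Δ'_λ for every real c > 0, and Δ'_{λ+μ} = Δ'_λ + Δ'_μ (Minkowski sum) for all such λ, μ. -/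
open Pointwise

/-- The transformed polytope `Δ'_λ := A⁻¹(Δ_λ − Bλ)`, where `Δ_λ` is the symplectic
Gelfand–Cetlin polytope, `A` is an invertible linear map of `ℝ^{n²}` and
`B : ℝⁿ → ℝ^{n²}` is linear. -/
def gcSP' (n : ℕ) (A : SPPattern n ≃ₗ[ℝ] SPPattern n)
    (B : (Fin n → ℝ) →ₗ[ℝ] SPPattern n) (lam : Fin n → ℝ) : Set (SPPattern n) :=
  ⇑A ⁻¹' ((fun v => v - B lam) '' gcSP n lam)

namespace GCAux

variable {n : ℕ}

def oddRow (n : ℕ) (x : SPPattern n) (k : ℕ) : ℕ → ℝ :=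
  fun i => if h : i < n - k then x.1 ⟨(k, i), h⟩ else 0
def evenRow (n : ℕ) (x : SPPattern n) (k : ℕ) : ℕ → ℝ :=
  fun i => if h : i < n - 1 - k then x.2 ⟨(k, i), h⟩ else 0
def lamRow (n : ℕ) (nu : Fin n → ℝ) : ℕ → ℝ :=
  fun i => if h : i < n then nu ⟨i, h⟩ else 0

def Xrow (n : ℕ) (nu : Fin n → ℝ) (x : SPPattern n) : ℕ → ℕ → ℝ
  | 0 => lamRow n nu
  | (s+1) => if s % 2 = 0 then oddRow n x (s / 2) else evenRow n x ((s - 1) / 2)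

lemma Xrow_odd (nu : Fin n → ℝ) (x : SPPattern n) (k : ℕ) :
    Xrow n nu x (2 * k + 1) = oddRow n x k := by
  show (if (2*k) % 2 = 0 then oddRow n x ((2*k) / 2) else _) = _
  rw [if_pos (by omega), show (2*k)/2 = k by omega]

lemma Xrow_even (nu : Fin n → ℝ) (x : SPPattern n) (k : ℕ) :
    Xrow n nu x (2 * k + 2) = evenRow n x k := by
  show (if (2*k+1) % 2 = 0 then _ else evenRow n x ((2*k+1-1)/2)) = _
  rw [if_neg (by omega), show (2*k+1-1)/2 = k by omega]

/-- Uniform formulation of membership in the GC polytope. -/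
lemma gcSP_iff_rows (nu : Fin n → ℝ) (x : SPPattern n) :
    x ∈ gcSP n nu ↔ ∀ s i, i < n - (s+1)/2 →
      Xrow n nu x s i ≥ Xrow n nu x (s+1) i ∧
      Xrow n nu x (s+1) i ≥ (if i + 1 < n - s/2 then Xrow n nu x s (i+1) else 0) := by
  constructor
  · rintro ⟨h1, h2, h3⟩ s i hi
    rcases Nat.even_or_odd s with ⟨k, hk⟩ | ⟨k, hk⟩
    · -- s = 2k : row s+1 = odd row k
      subst hk
      have hk2 : k + k = 2 * k := by omega
      rw [hk2] at hi ⊢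
      have hi' : i < n - k := by omega
      rw [Xrow_odd]
      rcases Nat.eq_zero_or_pos k with rfl | hkpos
      · -- row s = lamRow
        simp only [Nat.mul_zero, Nat.zero_add] at hi ⊢
        show Xrow n nu x 0 i ≥ _ ∧ _
        have h0 : Xrow n nu x 0 = lamRow n nu := rfl
        rw [h0]
        have hin : i < n := by omega
        constructor
        · simp only [lamRow, oddRow, Nat.sub_zero, dif_pos hin, dif_pos (show i < n - 0 by omega)]
          exact (h1 i hin).1
        · simp only [lamRow, oddRow]
          rw [dif_pos (show i < n - 0 by omega)]
          have h2' := (h1 i hin).2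
          by_cases hg : i + 1 < n
          · rw [if_pos (by omega : i + 1 < n - 0/2), dif_pos hg]
            rw [dif_pos hg] at h2'
            exact h2'
          · rw [if_neg (by omega : ¬ i + 1 < n - 0/2)]
            rw [dif_neg hg] at h2'
            exact h2' 
      · -- row s = 2(k-1)+2 = even row (k-1)
        obtain ⟨m, rfl⟩ : ∃ m, k = m + 1 := ⟨k - 1, by omega⟩
        have e : 2 * (m+1) = 2 * m + 2 := by ring
        rw [e, Xrow_even]
        have hi2 : i < n - (m + 1) := by omega
        have := h3 m i hi2
        constructor
        · simp only [evenRow, oddRow]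
          rw [dif_pos (by omega), dif_pos (by omega)]
          exact this.1
        · simp only [evenRow, oddRow]
          rw [dif_pos (by omega : i < n - (m+1))]
          have h2' := this.2
          by_cases hgg : i + 1 < n - 1 - m
          · rw [dif_pos hgg] at h2'
            rw [if_pos (by omega : i + 1 < n - (2*m+2)/2), dif_pos hgg]
            exact h2'
          · rw [dif_neg hgg] at h2'
            rw [if_neg (by omega : ¬ i + 1 < n - (2*m+2)/2)]
            exact h2'
    · -- s = 2k+1 : row s = odd row k, row s+1 = even row k
      subst hk
      have e1 : 2 * k + 1 + 1 = 2 * k + 2 := rfl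
      rw [e1, Xrow_odd, Xrow_even]
      have hi2 : i < n - 1 - k := by omega
      have := h2 k i hi2
      constructor
      · simp only [evenRow, oddRow]
        rw [dif_pos (by omega), dif_pos hi2]
        exact this.1
      · simp only [evenRow, oddRow]
        rw [dif_pos hi2, if_pos (by omega : i + 1 < n - (2*k+1)/2)]
        rw [dif_pos (by omega : i + 1 < n - k)]
        exact this.2
  · intro H
    refine ⟨?_, ?_, ?_⟩
    · intro i hin
      have := H 0 i (by omega)
      have h0 : Xrow n nu x 0 = lamRow n nu := rfl
      rw [show (0+1 : ℕ) = 2*0+1 from rfl, Xrow_odd, h0] at this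
      simp only [lamRow, oddRow] at this
      rw [dif_pos hin, dif_pos (by omega : i < n - 0)] at this
      constructor
      · exact this.1
      · have h2' := this.2
        by_cases hg : i + 1 < n
        · rw [if_pos (by omega : i + 1 < n - 0/2), dif_pos hg] at h2'
          rw [dif_pos hg]
          exact h2'
        · rw [if_neg (by omega : ¬ i + 1 < n - 0/2)] at h2'
          rw [dif_neg hg]
          exact h2'
    · intro k i hi
      have := H (2*k+1) i (by omega)
      rw [show 2*k+1+1 = 2*k+2 from rfl, Xrow_odd, Xrow_even] at this
      simp only [lamRow, oddRow, evenRow] at this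
      rw [dif_pos (by omega : i < n - k), dif_pos hi] at this
      refine ⟨this.1, ?_⟩
      have h2' := this.2
      rw [if_pos (by omega : i + 1 < n - (2*k+1)/2), dif_pos (by omega : i + 1 < n - k)] at h2'
      exact h2'
    · intro k i hi
      have := H (2*k+2) i (by omega)
      rw [show 2*k+2+1 = 2*(k+1)+1 from rfl, Xrow_odd, Xrow_even] at this
      simp only [oddRow, evenRow] at this
      rw [dif_pos (by omega : i < n - 1 - k), dif_pos (by omega : i < n - (k+1))] at this
      refine ⟨this.1, ?_⟩
      have h2' := this.2
      by_cases hg : i + 1 < n - 1 - k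
      · rw [if_pos (by omega : i + 1 < n - (2*k+2)/2), dif_pos hg] at h2'
        rw [dif_pos hg]
        exact h2'
      · rw [if_neg (by omega : ¬ i + 1 < n - (2*k+2)/2)] at h2'
        rw [dif_neg hg]
        exact h2'


lemma Xrow_add (nu nu' : Fin n → ℝ) (y z : SPPattern n) (s i : ℕ) :
    Xrow n (nu + nu') (y + z) s i = Xrow n nu y s i + Xrow n nu' z s i := by
  cases s with
  | zero =>
    simp only [Xrow, lamRow, Pi.add_apply]
    split_ifs <;> simp
  | succ s =>
    simp only [Xrow]
    split_ifs with h
    · simp only [oddRow, Prod.fst_add, Pi.add_apply]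
      split_ifs <;> simp
    · simp only [evenRow, Prod.snd_add, Pi.add_apply]
      split_ifs <;> simp

lemma Xrow_smul (nu : Fin n → ℝ) (x : SPPattern n) (c : ℝ) (s i : ℕ) :
    Xrow n (c • nu) (c • x) s i = c * Xrow n nu x s i := by
  cases s with
  | zero =>
    simp only [Xrow, lamRow, Pi.smul_apply, smul_eq_mul]
    split_ifs <;> simp
  | succ s =>
    simp only [Xrow]
    split_ifs with h
    · simp only [oddRow, Prod.smul_fst, Pi.smul_apply, smul_eq_mul]
      split_ifs <;> simp
    · simp only [evenRow, Prod.smul_snd, Pi.smul_apply, smul_eq_mul]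
      split_ifs <;> simp

lemma gcSP_add_mem {nu nu' : Fin n → ℝ} {y z : SPPattern n}
    (hy : y ∈ gcSP n nu) (hz : z ∈ gcSP n nu') : y + z ∈ gcSP n (nu + nu') := by
  rw [gcSP_iff_rows] at hy hz ⊢
  intro s i hi
  obtain ⟨a1, a2⟩ := hy s i hi
  obtain ⟨b1, b2⟩ := hz s i hi
  rw [Xrow_add, Xrow_add]
  constructor
  · exact add_le_add a1 b1
  · rw [Xrow_add]
    split_ifs at a2 b2 ⊢ <;> linarith

lemma gcSP_smul_mem {nu : Fin n → ℝ} {x : SPPattern n} {c : ℝ} (hc : 0 ≤ c)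
    (hx : x ∈ gcSP n nu) : c • x ∈ gcSP n (c • nu) := by
  rw [gcSP_iff_rows] at hx ⊢
  intro s i hi
  obtain ⟨a1, a2⟩ := hx s i hi
  rw [Xrow_smul, Xrow_smul]
  constructor
  · exact mul_le_mul_of_nonneg_left a1 hc
  · rw [Xrow_smul]
    split_ifs at a2 ⊢
    · exact mul_le_mul_of_nonneg_left a2 hc
    · have := mul_le_mul_of_nonneg_left a2 hc
      simpa using this

lemma gcSP_smul_eq (nu : Fin n → ℝ) (c : ℝ) (hc : 0 < c) :
    gcSP n (c • nu) = c • gcSP n nu := by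
  apply Set.Subset.antisymm
  · intro x hx
    refine ⟨c⁻¹ • x, ?_, by show c • c⁻¹ • x = x; rw [smul_smul, mul_inv_cancel₀ hc.ne', one_smul]⟩
    have := gcSP_smul_mem (le_of_lt (inv_pos.mpr hc)) hx
    rwa [smul_smul, inv_mul_cancel₀ hc.ne', one_smul] at this
  · rintro x ⟨y, hy, rfl⟩
    exact gcSP_smul_mem hc.le hy


/-- A row is admissible: weakly decreasing and last entry nonnegative. -/
def Adm (f : ℕ → ℝ) (m : ℕ) : Prop :=
  ∀ i, i < m → (if i + 1 < m then f (i + 1) else 0) ≤ f i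

lemma Adm.nonneg {f : ℕ → ℝ} {m : ℕ} (h : Adm f m) : ∀ i, i < m → 0 ≤ f i := by
  have H : ∀ d i, i < m → m - i ≤ d → 0 ≤ f i := by
    intro d
    induction d with
    | zero => intro i hi hd; omega
    | succ d ih =>
      intro i hi hd
      have h1 := h i hi
      by_cases hg : i + 1 < m
      · rw [if_pos hg] at h1
        exact le_trans (ih (i + 1) hg (by omega)) h1
      · rwa [if_neg hg] at h1
  exact fun i hi => H (m - i) i hi le_rfl

/-- The `λ`-part of the greedy decomposition of a pattern in `Δ_{λ+μ}`. -/
noncomputable def Yrow (n : ℕ) (lam mu : Fin n → ℝ) (x : SPPattern n) : ℕ → ℕ → ℝ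
  | 0 => lamRow n lam
  | (s+1) => fun i =>
      min (Yrow n lam mu x s i)
        (Xrow n (lam + mu) x (s + 1) i -
          (if i + 1 < n - s / 2 then
            Xrow n (lam + mu) x s (i + 1) - Yrow n lam mu x s (i + 1) else 0))

noncomputable def Zrow (n : ℕ) (lam mu : Fin n → ℝ) (x : SPPattern n) (s i : ℕ) : ℝ :=
  Xrow n (lam + mu) x s i - Yrow n lam mu x s i

lemma Yrow_succ (lam mu : Fin n → ℝ) (x : SPPattern n) (s i : ℕ) :
    Yrow n lam mu x (s + 1) i =
      min (Yrow n lam mu x s i)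
        (Xrow n (lam + mu) x (s + 1) i -
          (if i + 1 < n - s / 2 then Zrow n lam mu x s (i + 1) else 0)) := rfl

lemma step (lam mu : Fin n → ℝ) (x : SPPattern n) (hx : x ∈ gcSP n (lam + mu)) (s : ℕ)
    (hY : Adm (Yrow n lam mu x s) (n - s / 2)) (hZ : Adm (Zrow n lam mu x s) (n - s / 2)) :
    ∀ i, i < n - (s + 1) / 2 →
      ((if i + 1 < n - s / 2 then Yrow n lam mu x s (i + 1) else 0) ≤ Yrow n lam mu x (s + 1) i ∧
        Yrow n lam mu x (s + 1) i ≤ Yrow n lam mu x s i) ∧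
      ((if i + 1 < n - s / 2 then Zrow n lam mu x s (i + 1) else 0) ≤ Zrow n lam mu x (s + 1) i ∧
        Zrow n lam mu x (s + 1) i ≤ Zrow n lam mu x s i) := by
  intro i hi
  have hi' : i < n - s / 2 := by omega
  obtain ⟨hx1, hx2⟩ := (gcSP_iff_rows _ x).mp hx s i hi
  have hYi := hY i hi'
  have hZi := hZ i hi'
  simp only [Zrow] at hZi ⊢
  rw [Yrow_succ]
  simp only [Zrow]
  by_cases hg : i + 1 < n - s / 2
  · simp only [if_pos hg] at hx2 hYi hZi ⊢
    set t := Xrow n (lam + mu) x (s + 1) i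
    set T := Xrow n (lam + mu) x s i
    set T' := Xrow n (lam + mu) x s (i + 1)
    set U := Yrow n lam mu x s i
    set U' := Yrow n lam mu x s (i + 1)
    have m1 : min U (t - (T' - U')) ≤ U := min_le_left _ _
    have m2 : min U (t - (T' - U')) ≤ t - (T' - U') := min_le_right _ _
    have m3 : U' ≤ min U (t - (T' - U')) := le_min (by linarith) (by linarith)
    have m4 : t - (T - U) ≤ min U (t - (T' - U')) := le_min (by linarith) (by linarith)
    exact ⟨⟨m3, m1⟩, ⟨by linarith, by linarith⟩⟩
  · simp only [if_neg hg] at hx2 hYi hZi ⊢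
    set t := Xrow n (lam + mu) x (s + 1) i
    set T := Xrow n (lam + mu) x s i
    set U := Yrow n lam mu x s i
    have m1 : min U (t - 0) ≤ U := min_le_left _ _
    have m2 : min U (t - 0) ≤ t - 0 := min_le_right _ _
    have m3 : (0:ℝ) ≤ min U (t - 0) := le_min (by linarith) (by linarith)
    have m4 : t - (T - U) ≤ min U (t - 0) := le_min (by linarith) (by linarith)
    exact ⟨⟨m3, m1⟩, ⟨by linarith, by linarith⟩⟩

lemma Zrow_zero (lam mu : Fin n → ℝ) (x : SPPattern n) (j : ℕ) :
    Zrow n lam mu x 0 j = lamRow n mu j := by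
  show Xrow n (lam + mu) x 0 j - lamRow n lam j = lamRow n mu j
  simp only [Xrow, lamRow]
  split_ifs with h
  · simp only [Pi.add_apply]
    ring
  · simp

lemma rows_adm (lam mu : Fin n → ℝ) (x : SPPattern n) (hx : x ∈ gcSP n (lam + mu))
    (hlamAdm : Adm (lamRow n lam) n) (hmuAdm : Adm (lamRow n mu) n) :
    ∀ s, Adm (Yrow n lam mu x s) (n - s / 2) ∧ Adm (Zrow n lam mu x s) (n - s / 2) := by
  intro s
  induction s with
  | zero =>
    have e : n - 0 / 2 = n := by omega
    rw [e]
    constructor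
    · exact hlamAdm
    · intro i hi
      simp only [Zrow_zero]
      exact hmuAdm i hi
  | succ s ih =>
    obtain ⟨hY, hZ⟩ := ih
    have st := step lam mu x hx s hY hZ
    constructor
    · intro i hi
      obtain ⟨⟨y1, y2⟩, _⟩ := st i hi
      by_cases hg : i + 1 < n - (s + 1) / 2
      · rw [if_pos hg]
        obtain ⟨⟨_, y2'⟩, _⟩ := st (i + 1) hg
        have hgy : i + 1 < n - s / 2 := by omega
        rw [if_pos hgy] at y1
        exact le_trans y2' y1
      · rw [if_neg hg]
        by_cases hgy : i + 1 < n - s / 2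
        · rw [if_pos hgy] at y1
          exact le_trans (hY.nonneg (i + 1) hgy) y1
        · rw [if_neg hgy] at y1
          exact y1
    · intro i hi
      obtain ⟨_, ⟨z1, z2⟩⟩ := st i hi
      by_cases hg : i + 1 < n - (s + 1) / 2
      · rw [if_pos hg]
        obtain ⟨_, ⟨_, z2'⟩⟩ := st (i + 1) hg
        have hgy : i + 1 < n - s / 2 := by omega
        rw [if_pos hgy] at z1
        exact le_trans z2' z1
      · rw [if_neg hg]
        by_cases hgy : i + 1 < n - s / 2
        · rw [if_pos hgy] at z1
          exact le_trans (hZ.nonneg (i + 1) hgy) z1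
        · rw [if_neg hgy] at z1
          exact z1

/-- The `λ`-part of the decomposition, as a pattern. -/
noncomputable def Ypat (n : ℕ) (lam mu : Fin n → ℝ) (x : SPPattern n) : SPPattern n :=
  (fun p => Yrow n lam mu x (2 * p.1.1 + 1) p.1.2,
   fun p => Yrow n lam mu x (2 * p.1.1 + 2) p.1.2)

lemma Xrow_Ypat (lam mu : Fin n → ℝ) (x : SPPattern n) (s i : ℕ) (hi : i < n - s / 2) :
    Xrow n lam (Ypat n lam mu x) s i = Yrow n lam mu x s i := by
  cases s with
  | zero => rfl
  | succ s =>
    simp only [Xrow]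
    by_cases hp : s % 2 = 0
    · rw [if_pos hp]
      simp only [oddRow, Ypat]
      rw [dif_pos (by omega : i < n - s / 2)]
      rw [show 2 * (s / 2) + 1 = s + 1 by omega]
    · rw [if_neg hp]
      simp only [evenRow, Ypat]
      rw [dif_pos (by omega : i < n - 1 - (s - 1) / 2)]
      rw [show 2 * ((s - 1) / 2) + 2 = s + 1 by omega]

lemma Xrow_Zpat (lam mu : Fin n → ℝ) (x : SPPattern n) (s i : ℕ) (hi : i < n - s / 2) :
    Xrow n mu (x - Ypat n lam mu x) s i = Zrow n lam mu x s i := by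
  cases s with
  | zero =>
    rw [show Zrow n lam mu x 0 i = lamRow n mu i from Zrow_zero lam mu x i]
    rfl
  | succ s =>
    simp only [Xrow, Zrow]
    by_cases hp : s % 2 = 0
    · simp only [if_pos hp, oddRow, Ypat, Prod.fst_sub, Pi.sub_apply,
        dif_pos (by omega : i < n - s / 2)]
      rw [show 2 * (s / 2) + 1 = s + 1 by omega]
    · simp only [if_neg hp, evenRow, Ypat, Prod.snd_sub, Pi.sub_apply,
        dif_pos (by omega : i < n - 1 - (s - 1) / 2)]
      rw [show 2 * ((s - 1) / 2) + 2 = s + 1 by omega]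

lemma gcSP_add_eq (lam mu : Fin n → ℝ)
    (hlam : ∀ i j : Fin n, i ≤ j → lam j ≤ lam i) (hlam0 : ∀ i, 0 ≤ lam i)
    (hmu : ∀ i j : Fin n, i ≤ j → mu j ≤ mu i) (hmu0 : ∀ i, 0 ≤ mu i) :
    gcSP n (lam + mu) = gcSP n lam + gcSP n mu := by
  have adm_of : ∀ (nu : Fin n → ℝ), (∀ i j : Fin n, i ≤ j → nu j ≤ nu i) → (∀ i, 0 ≤ nu i) →
      Adm (lamRow n nu) n := by
    intro nu h1 h0 i hi
    simp only [lamRow]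
    rw [dif_pos hi]
    by_cases hg : i + 1 < n
    · rw [if_pos hg, dif_pos hg]
      exact h1 ⟨i, hi⟩ ⟨i + 1, hg⟩ (by simp [Fin.le_def])
    · rw [if_neg hg]
      exact h0 _
  apply Set.Subset.antisymm
  · intro x hx
    have hadm := rows_adm lam mu x hx (adm_of lam hlam hlam0) (adm_of mu hmu hmu0)
    refine Set.mem_add.mpr ⟨Ypat n lam mu x, ?_, x - Ypat n lam mu x, ?_, by abel⟩
    · rw [gcSP_iff_rows]
      intro s i hi
      have st := step lam mu x hx s (hadm s).1 (hadm s).2 i hi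
      rw [Xrow_Ypat lam mu x s i (by omega), Xrow_Ypat lam mu x (s + 1) i (by omega)]
      refine ⟨st.1.2, ?_⟩
      by_cases hg : i + 1 < n - s / 2
      · rw [if_pos hg, Xrow_Ypat lam mu x s (i + 1) hg]
        have := st.1.1
        rwa [if_pos hg] at this
      · rw [if_neg hg]
        have := st.1.1
        rwa [if_neg hg] at this
    · rw [gcSP_iff_rows]
      intro s i hi
      have st := step lam mu x hx s (hadm s).1 (hadm s).2 i hi
      rw [Xrow_Zpat lam mu x s i (by omega), Xrow_Zpat lam mu x (s + 1) i (by omega)]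
      refine ⟨st.2.2, ?_⟩
      by_cases hg : i + 1 < n - s / 2
      · rw [if_pos hg, Xrow_Zpat lam mu x s (i + 1) hg]
        have := st.2.1
        rwa [if_pos hg] at this
      · rw [if_neg hg]
        have := st.2.1
        rwa [if_neg hg] at this
  · rintro x ⟨y, hy, z, hz, rfl⟩
    exact gcSP_add_mem hy hz

end GCAux

/-- The assignment `λ ↦ Δ'_λ = A⁻¹(Δ_λ − Bλ)` is linear on the cone
`{λ_1 ≥ … ≥ λ_n ≥ 0}`: `Δ'_{cλ} = c·Δ'_λ` for `c > 0` and `Δ'_{λ+μ} = Δ'_λ + Δ'_μ`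
(Minkowski sum). -/
theorem gcSP'_linear (n : ℕ) (hn : 1 ≤ n)
    (A : SPPattern n ≃ₗ[ℝ] SPPattern n) (B : (Fin n → ℝ) →ₗ[ℝ] SPPattern n)
    (lam mu : Fin n → ℝ)
    (hlam : ∀ i j : Fin n, i ≤ j → lam j ≤ lam i) (hlam0 : ∀ i, 0 ≤ lam i)
    (hmu : ∀ i j : Fin n, i ≤ j → mu j ≤ mu i) (hmu0 : ∀ i, 0 ≤ mu i)
    (c : ℝ) (hc : 0 < c) :
    gcSP' n A B (c • lam) = c • gcSP' n A B lam ∧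
    gcSP' n A B (lam + mu) = gcSP' n A B lam + gcSP' n A B mu := by
  constructor
  · show ⇑A ⁻¹' ((fun v => v - B (c • lam)) '' gcSP n (c • lam)) = c • gcSP' n A B lam
    rw [GCAux.gcSP_smul_eq lam c hc]
    ext v
    simp only [gcSP', Set.mem_preimage, Set.mem_image, Set.mem_smul_set]
    constructor
    · rintro ⟨w, ⟨u, hu, rfl⟩, heq⟩
      have h1 : A v = c • (u - B lam) := by rw [← heq, map_smul, smul_sub]
      refine ⟨c⁻¹ • v, ⟨u, hu, ?_⟩, ?_⟩
      · rw [map_smul, h1, smul_smul, inv_mul_cancel₀ hc.ne', one_smul]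
      · rw [smul_smul, mul_inv_cancel₀ hc.ne', one_smul]
    · rintro ⟨p, ⟨u, hu, hup⟩, rfl⟩
      refine ⟨c • u, ⟨u, hu, rfl⟩, ?_⟩
      rw [map_smul, map_smul, ← hup, smul_sub]
  · show ⇑A ⁻¹' ((fun v => v - B (lam + mu)) '' gcSP n (lam + mu)) =
      gcSP' n A B lam + gcSP' n A B mu
    rw [GCAux.gcSP_add_eq lam mu hlam hlam0 hmu hmu0]
    ext v
    simp only [gcSP', Set.mem_preimage, Set.mem_image, Set.mem_add]
    constructor
    · rintro ⟨w, ⟨y, hy, z, hz, rfl⟩, heq⟩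
      have h1 : (y - B lam) + (z - B mu) = A v := by
        rw [← heq, map_add]; abel
      refine ⟨A.symm (y - B lam), ⟨y, hy, ?_⟩, A.symm (z - B mu), ⟨z, hz, ?_⟩, ?_⟩
      · rw [A.apply_symm_apply]
      · rw [A.apply_symm_apply]
      · rw [← map_add, h1, A.symm_apply_apply]
    · rintro ⟨p, ⟨y, hy, hyp⟩, q, ⟨z, hz, hzq⟩, rfl⟩
      refine ⟨y + z, ⟨y, hy, z, hz, rfl⟩, ?_⟩
      rw [map_add, map_add, ← hyp, ← hzq]
      abel
end
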